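/- Let A and B be sequences of elements of S with |A| = |B| − 1 = n − 1, let D ⊆ S have size k − n − 2, and let x, y be two distinct elements of S, with A, B, D, {x}, {y} pairwise disjoint. Then (T_{D ∪ B}(y) / T_{D ∪ B}(x)) · P_{D ∪ {y}}((x) ⌢ A, B) = (−1)^{t+1} · P_{D ∪ {x}}((y) ⌢ A, B), where (x) ⌢ A denotes the sequence A with x prepended. -/

import Mathlib

/-- `detCols L` is the determinant of the `k × k` matrix whose `j`-th column is the
`j`-th entry of the list `L` (lists of length ≠ `k` are padded with `0`). -/
def detCols {F : Type} [CommRing F] {k : ℕ} (L : List (Fin k → F)) : F :=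
  Matrix.det (Matrix.of fun i j : Fin k => L.getD (j : ℕ) 0 i)

/-- The Segre product `P_D(A, B)` of the sequences `A = (a_1, …, a_n)` and
`B = (b_0, …, b_{n−1})` with base `D`, with respect to the family of tangent functions `T`:
`∏_{i=1}^n T_{D ∪ {a_1,…,a_{i−1},b_i,…,b_{n−1}}}(a_i) ·
  T_{D ∪ {a_1,…,a_{i−1},b_i,…,b_{n−1}}}(b_{i−1})⁻¹`. -/
def segreP {F : Type} [Field F] [DecidableEq F] {k : ℕ}
    (T : Finset (Fin k → F) → (Fin k → F) → F)
    (D : Finset (Fin k → F)) (A B : List (Fin k → F)) : F :=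
  ∏ j ∈ Finset.range A.length,
    (T (D ∪ (A.take j).toFinset ∪ (B.drop (j + 1)).toFinset) (A.getD j 0) *
      (T (D ∪ (A.take j).toFinset ∪ (B.drop (j + 1)).toFinset) (B.getD j 0))⁻¹)

/-- `T` is a family of tangent functions for `S` (with `t` tangent hyperplanes through
each subset of size `k − 2`): for every `Y ⊆ S` with `|Y| = k − 2` there is a set `Φ` of
`t` pairwise linearly independent linear forms, each vanishing on `Y` and nonzero at every
vector of `S \ Y`, with `T Y = ∏_{α ∈ Φ} α`. -/
def IsTangentFamily {F : Type} [Field F] [DecidableEq F] {k : ℕ} (t : ℕ)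
    (S : Finset (Fin k → F)) (T : Finset (Fin k → F) → (Fin k → F) → F) : Prop :=
  ∀ Y : Finset (Fin k → F), Y ⊆ S → Y.card = k - 2 →
    ∃ Φ : Finset ((Fin k → F) →ₗ[F] F),
      Φ.card = t ∧
      (∀ α ∈ Φ, ∀ β ∈ Φ, α ≠ β → ∀ c : F, α ≠ c • β) ∧
      (∀ α ∈ Φ, ∀ y ∈ Y, α y = 0) ∧
      (∀ α ∈ Φ, ∀ s ∈ S, s ∉ Y → α s ≠ 0) ∧
      (∀ x, T Y x = ∏ α ∈ Φ, α x)

/-- The subsequence of `L` consisting of the entries whose positions lie in `s`,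
in their original order (`d` is a default value). -/
def subseq {α : Type} (d : α) (L : List α) (s : Finset ℕ) : List α :=
  ((List.range L.length).filter (fun i => decide (i ∈ s))).map (fun i => L.getD i d)

/-- The subsequence of `L` consisting of the entries whose positions do not lie in `s`,
in their original order (`d` is a default value). -/
def subseqC {α : Type} (d : α) (L : List α) (s : Finset ℕ) : List α :=
  ((List.range L.length).filter (fun i => decide (i ∉ s))).map (fun i => L.getD i d)

/-- The number of transpositions needed (counted as the number of inversions) to reorder a
list of length `len` so that the entries in positions `s` occupy the last `|s|` positions,
preserving the relative order of the two groups. -/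
def invCount (s : Finset ℕ) (len : ℕ) : ℕ :=
  ((Finset.range len ×ˢ Finset.range len).filter
    (fun ij => ij.1 ∈ s ∧ ij.2 ∉ s ∧ ij.1 < ij.2)).card


/-!
Peeling off the first factor of both Segre products leaves the same product on each side, so
the claim reduces to Segre's lemma of tangents for the points `x`, `y`, `b₀` over the base
`E = D ∪ {b₁, …, b_{n-1}}`.

For three points `x, y, z ∈ S \ E`, the set `W = E ∪ {x, y, z}` is a basis contained in `S`.
Given `b ≠ c` in `W`, the hyperplanes through `Y = W \ {b, c}` form a pencil parametrized by
the slope `coord b / coord c ∈ Fˣ`. Since no `k` points of `S` are dependent, each of the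
`q - 1 - t` points of `S \ W` and each of the `t` tangents at `Y` has its own slope, so together
they use every slope exactly once. Wilson's theorem then gives
`T_Y(b) / T_Y(c) = (-1)^(t+1) ∏_{u ∈ S \ W} coord b u / coord c u`,
and the three coordinate products cancel when the three cyclic ratios are multiplied.
-/

open Finset

namespace FiniteField

variable {F : Type*} [Field F] [Fintype F]

theorem prod_eq_neg_one_of_card_add_one {s : Finset F} (h0 : 0 ∉ s)
    (hs : s.card + 1 = Fintype.card F) : ∏ a ∈ s, a = -1 := by
  classical
  have hs : s = univ.erase 0 :=
    eq_of_subset_of_card_le (fun a ha => mem_erase.2 ⟨ne_of_mem_of_not_mem ha h0, mem_univ a⟩)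
      (by rw [card_erase_of_mem (mem_univ 0), card_univ]; omega)
  have hunits : ∏ a ∈ univ.erase (0 : F), a = ∏ u : Fˣ, (u : F) :=
    prod_nbij' (fun a => if h : a = 0 then 1 else Units.mk0 a h) (fun u => u) (by simp)
      (by simp) (by intro a ha; simp_all) (by simp) (by intro a ha; simp_all)
  rw [hs, hunits, ← Units.coe_prod, prod_univ_units_id_eq_neg_one, Units.val_neg, Units.val_one]

theorem prod_mul_prod_eq_neg_one {ι κ : Type*} {s : Finset ι} {t : Finset κ} {f : ι → F}
    {g : κ → F} (hf : Set.InjOn f s) (hg : Set.InjOn g t) (hfg : ∀ i ∈ s, ∀ j ∈ t, f i ≠ g j)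
    (hf0 : ∀ i ∈ s, f i ≠ 0) (hg0 : ∀ j ∈ t, g j ≠ 0)
    (hcard : s.card + t.card + 1 = Fintype.card F) :
    (∏ i ∈ s, f i) * ∏ j ∈ t, g j = -1 := by
  classical
  have hdisj : Disjoint (s.image f) (t.image g) := by
    simp only [disjoint_left, mem_image, not_exists, not_and]
    rintro _ ⟨i, hi, rfl⟩ j hj h
    exact hfg i hi j hj h.symm
  calc (∏ i ∈ s, f i) * ∏ j ∈ t, g j = (∏ a ∈ s.image f, a) * ∏ a ∈ t.image g, a := by
        rw [prod_image hf, prod_image hg]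
    _ = ∏ a ∈ s.image f ∪ t.image g, a := (prod_union hdisj).symm
    _ = -1 := by
      refine prod_eq_neg_one_of_card_add_one ?_ ?_
      · simp only [mem_union, mem_image, not_or, not_exists, not_and]
        exact ⟨hf0, hg0⟩
      · rwa [card_union_of_disjoint hdisj, card_image_of_injOn hf, card_image_of_injOn hg]

end FiniteField

theorem smul_add_smul_eq_div_smul {F M : Type*} [Field F] [AddCommGroup M] [Module F M]
    (v w : M) {a₁ a₂ b₁ b₂ : F} (hb₁ : b₁ ≠ 0) (h : a₂ * b₁ = a₁ * b₂) :
    a₁ • v + a₂ • w = (a₁ / b₁) • (b₁ • v + b₂ • w) := by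
  rw [smul_add, smul_smul, smul_smul, div_mul_cancel₀ _ hb₁, div_mul_eq_mul_div,
    ← h, mul_div_cancel_right₀ _ hb₁]

theorem Module.Basis.eq_smul_coord_add_smul_coord {F V ι : Type*} [Field F] [AddCommGroup V]
    [Module F V] (Bs : Module.Basis ι F V) {b c : ι} (hbc : b ≠ c) {α : V →ₗ[F] F}
    (hα : ∀ i, i ≠ b → i ≠ c → α (Bs i) = 0) :
    α = α (Bs b) • Bs.coord b + α (Bs c) • Bs.coord c := by
  refine Bs.ext fun i => ?_
  by_cases hib : i = b
  · subst hib; simp [hbc.symm]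
  by_cases hic : i = c
  · subst hic; simp [hbc]
  simp [hα i hib hic, Ne.symm hib, Ne.symm hic]

def IsArc (F : Type*) {V : Type*} [Field F] [AddCommGroup V] [Module F V] (k : ℕ)
    (S : Finset V) : Prop :=
  ∀ A ⊆ S, A.card = k →
    LinearIndependent F (fun v : A => (v : V)) ∧ Submodule.span F (A : Set V) = ⊤

namespace IsArc

variable {F V : Type*} [Field F] [AddCommGroup V] [Module F V] {k : ℕ} {S W : Finset V}

noncomputable def basis (hS : IsArc F k S) (hWS : W ⊆ S) (hW : W.card = k) :
    Module.Basis W F V :=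
  Module.Basis.mk (hS W hWS hW).1 (by simp [(hS W hWS hW).2])

variable (hS : IsArc F k S) (hWS : W ⊆ S) (hW : W.card = k)

@[simp]
theorem basis_apply (w : W) : hS.basis hWS hW w = w :=
  Module.Basis.mk_apply _ _ w

theorem mem_span_of_coord_eq_zero {Q : Finset V} {v : V}
    (hv : ∀ w : W, (w : V) ∉ Q → (hS.basis hWS hW).coord w v = 0) :
    v ∈ Submodule.span F (Q : Set V) := by
  refine Submodule.span_mono ?_ ((hS.basis hWS hW).mem_span_repr_support v)
  rintro _ ⟨w, hw, rfl⟩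
  by_contra hwQ
  exact (Finsupp.mem_support_iff.1 hw) (hv w (by simpa using hwQ))

variable [DecidableEq V]

include hS in
theorem notMem_span {Q : Finset V} (hQS : Q ⊆ S) (hQ : Q.card + 1 = k)
    {u : V} (hu : u ∈ S) (huQ : u ∉ Q) : u ∉ Submodule.span F (Q : Set V) := by
  have hind : LinearIndepOn F id ((insert u Q : Finset V) : Set V) :=
    (hS (insert u Q) (insert_subset hu hQS) (by rw [card_insert_of_notMem huQ, hQ])).1
  rw [coe_insert] at hind
  exact ((linearIndepOn_id_insert (by simpa using huQ)).1 hind).2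

theorem coord_ne_zero {u : V} (hu : u ∈ S) (huW : u ∉ W) (w : W) :
    (hS.basis hWS hW).coord w u ≠ 0 := by
  intro hwu
  refine hS.notMem_span (Q := W.erase w) ((erase_subset _ _).trans hWS) ?_ hu
    (fun h => huW (mem_of_mem_erase h)) (hS.mem_span_of_coord_eq_zero hWS hW fun w' hw' => ?_)
  · have := card_pos.2 ⟨_, w.2⟩; rw [card_erase_of_mem w.2]; omega
  · obtain rfl : w' = w := Subtype.ext (by simpa [w'.2] using hw')
    exact hwu

theorem injOn_coord_div {b c : W} (hbc : b ≠ c) :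
    Set.InjOn (fun u => (hS.basis hWS hW).coord b u / (hS.basis hWS hW).coord c u)
      (S \ W : Finset V) := by
  set Bs := hS.basis hWS hW
  intro u hu u' hu' h
  simp only [coe_sdiff, Set.mem_sdiff, mem_coe] at hu hu'
  replace h := (div_eq_div_iff (hS.coord_ne_zero hWS hW hu.1 hu.2 c)
    (hS.coord_ne_zero hWS hW hu'.1 hu'.2 c)).1 h
  by_contra hne
  set Q := insert u' ((W.erase b).erase c)
  have hcb : (c : V) ∈ W.erase b := mem_erase.2 ⟨fun h => hbc (Subtype.ext h).symm, c.2⟩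
  have hQS : Q ⊆ S :=
    insert_subset hu'.1 ((erase_subset (c : V) _).trans ((erase_subset (b : V) _).trans hWS))
  have hQ : Q.card + 1 = k := by
    rw [card_insert_of_notMem fun h => hu'.2 (mem_of_mem_erase (mem_of_mem_erase h)),
      card_erase_of_mem hcb, card_erase_of_mem b.2, hW]
    have := card_pos.2 ⟨_, hcb⟩
    rw [card_erase_of_mem b.2, hW] at this
    omega
  -- `v` has no `b`- and `c`-coordinates, and `u` is a combination of `v` and `u'`
  set v := Bs.coord b u' • u - Bs.coord b u • u'
  have hv : v ∈ Submodule.span F (Q : Set V) := by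
    refine hS.mem_span_of_coord_eq_zero hWS hW fun w hwQ => ?_
    by_cases hwb : w = b
    · subst hwb; simp only [v, map_sub, map_smul, smul_eq_mul]; ring
    by_cases hwc : w = c
    · subst hwc; simp only [v, map_sub, map_smul, smul_eq_mul]; linear_combination -h
    simp [Q, hwb, hwc] at hwQ
  have hu'Q : u' ∈ Submodule.span F (Q : Set V) := Submodule.subset_span (by simp [Q])
  have hb : Bs.coord b u' ≠ 0 := hS.coord_ne_zero hWS hW hu'.1 hu'.2 b
  refine hS.notMem_span hQS hQ hu.1 (by simp [Q, hne, hu.2]) ?_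
  convert Submodule.add_mem _ (Submodule.smul_mem _ (Bs.coord b u')⁻¹ hv)
    (Submodule.smul_mem _ ((Bs.coord b u')⁻¹ * Bs.coord b u) hu'Q) using 1
  simp only [v, smul_sub, smul_smul, inv_mul_cancel₀ hb, one_smul]
  abel

theorem eq_smul_coord_add_smul_coord {b c : W} (hbc : b ≠ c) {Y : Finset V}
    (hWY : insert (b : V) (insert (c : V) Y) = W) {α : V →ₗ[F] F} (hα : ∀ y ∈ Y, α y = 0) :
    α = α b • (hS.basis hWS hW).coord b + α c • (hS.basis hWS hW).coord c := by
  have hY : ∀ w : W, w ≠ b → w ≠ c → (w : V) ∈ Y := fun w hwb hwc => by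
    have hw : (w : V) ∈ insert (b : V) (insert (c : V) Y) := by rw [hWY]; exact w.2
    simp only [mem_insert, ← Subtype.ext_iff, hwb, hwc, false_or] at hw
    exact hw
  simpa using (hS.basis hWS hW).eq_smul_coord_add_smul_coord hbc (α := α) fun w hwb hwc => by
    simpa using hα w (hY w hwb hwc)

theorem prod_coord_div_mul_prod_neg_div [Fintype F] {b c : W} (hbc : b ≠ c) {Y : Finset V}
    (hbY : (b : V) ∉ Y) (hcY : (c : V) ∉ Y) (hWY : insert (b : V) (insert (c : V) Y) = W)
    {Φ : Finset (V →ₗ[F] F)} (hΦindep : ∀ α ∈ Φ, ∀ β ∈ Φ, α ≠ β → ∀ a : F, α ≠ a • β)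
    (hΦY : ∀ α ∈ Φ, ∀ y ∈ Y, α y = 0) (hΦS : ∀ α ∈ Φ, ∀ s ∈ S, s ∉ Y → α s ≠ 0)
    (hcard : S.card + Φ.card = Fintype.card F + k - 1) :
    (∏ u ∈ S \ W, (hS.basis hWS hW).coord b u / (hS.basis hWS hW).coord c u) *
      ∏ α ∈ Φ, -(α c / α b) = -1 := by
  set Bs := hS.basis hWS hW
  have hΦb : ∀ α ∈ Φ, α b ≠ 0 := fun α hα => hΦS α hα b (hWS b.2) hbY
  have hΦc : ∀ α ∈ Φ, α c ≠ 0 := fun α hα => hΦS α hα c (hWS c.2) hcY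
  have hΦrep : ∀ α ∈ Φ, α = α b • Bs.coord b + α c • Bs.coord c := fun α hα =>
    hS.eq_smul_coord_add_smul_coord hWS hW hbc hWY (hΦY α hα)
  have hUcoord : ∀ u ∈ S \ W, ∀ w, Bs.coord w u ≠ 0 := fun u hu =>
    hS.coord_ne_zero hWS hW (mem_sdiff.1 hu).1 (mem_sdiff.1 hu).2
  have hΦinj : Set.InjOn (fun α => -(α c / α b)) (Φ : Set (V →ₗ[F] F)) := by
    intro α hα β hβ h
    by_contra hne
    refine hΦindep α hα β hβ hne (α b / β b) ?_
    simp only [neg_inj, div_eq_div_iff (hΦb α hα) (hΦb β hβ)] at h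
    have := smul_add_smul_eq_div_smul (Bs.coord b) (Bs.coord c) (a₁ := α b) (a₂ := α c)
      (hΦb β hβ) (h.trans (mul_comm _ _))
    rwa [← hΦrep α hα, ← hΦrep β hβ] at this
  have hdisj : ∀ u ∈ S \ W, ∀ α ∈ Φ, Bs.coord b u / Bs.coord c u ≠ -(α c / α b) := by
    intro u hu α hα h
    refine hΦS α hα u (mem_sdiff.1 hu).1
      (fun huY => (mem_sdiff.1 hu).2 (hWY ▸ mem_insert_of_mem (mem_insert_of_mem huY))) ?_
    have := hUcoord u hu c
    have := hΦb α hα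
    field_simp at h
    rw [hΦrep α hα]
    simp only [LinearMap.add_apply, LinearMap.smul_apply, smul_eq_mul]
    linear_combination h
  refine FiniteField.prod_mul_prod_eq_neg_one (hS.injOn_coord_div hWS hW hbc) hΦinj hdisj
    (fun u hu => div_ne_zero (hUcoord u hu b) (hUcoord u hu c))
    (fun α hα => neg_ne_zero.2 (div_ne_zero (hΦc α hα) (hΦb α hα))) ?_
  rw [card_sdiff_of_subset hWS, hW]
  have := card_le_card hWS
  have : 0 < Fintype.card F := Fintype.card_pos
  omega

end IsArc

namespace IsTangentFamily

variable {F : Type} [Field F] [DecidableEq F] {k t : ℕ} {S : Finset (Fin k → F)}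
  {T : Finset (Fin k → F) → (Fin k → F) → F}

theorem apply_ne_zero (hT : IsTangentFamily t S T) {Y : Finset (Fin k → F)} (hYS : Y ⊆ S)
    (hY : Y.card = k - 2) {w : Fin k → F} (hw : w ∈ S) (hwY : w ∉ Y) : T Y w ≠ 0 := by
  obtain ⟨Φ, -, -, -, hΦS, hΦT⟩ := hT Y hYS hY
  rw [hΦT w]
  exact prod_ne_zero_iff.2 fun α hα => hΦS α hα w hw hwY

theorem div_eq_prod_coord_div [Fintype F] (hT : IsTangentFamily t S T) (hS : IsArc F k S)
    (hSt : S.card + t = Fintype.card F + k - 1) {W Y : Finset (Fin k → F)} (hWS : W ⊆ S)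
    (hW : W.card = k) {b c : W} (hbc : b ≠ c) (hbY : (b : Fin k → F) ∉ Y)
    (hcY : (c : Fin k → F) ∉ Y) (hWY : insert (b : Fin k → F) (insert (c : Fin k → F) Y) = W) :
    T Y b / T Y c = (-1) ^ (t + 1) *
      ∏ u ∈ S \ W, (hS.basis hWS hW).coord b u / (hS.basis hWS hW).coord c u := by
  have hYS : Y ⊆ S := fun y hy => hWS (hWY ▸ mem_insert_of_mem (mem_insert_of_mem hy))
  have hY : Y.card = k - 2 := by
    rw [← hWY, card_insert_of_notMem (by simp [Subtype.coe_ne_coe.2 hbc, hbY]),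
      card_insert_of_notMem hcY] at hW
    omega
  obtain ⟨Φ, hΦcard, hΦindep, hΦY, hΦS, hΦT⟩ := hT Y hYS hY
  have hwilson := hS.prod_coord_div_mul_prod_neg_div hWS hW hbc hbY hcY hWY hΦindep hΦY hΦS
    (hΦcard ▸ hSt)
  have htangent : ∏ α ∈ Φ, -(α c / α b) = (-1) ^ t * (T Y c / T Y b) := by
    simp only [prod_neg, prod_div_distrib, hΦcard, hΦT]
  rw [htangent] at hwilson
  have := hT.apply_ne_zero hYS hY (hWS b.2) hbY
  have := hT.apply_ne_zero hYS hY (hWS c.2) hcY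
  field_simp at hwilson ⊢
  rw [pow_succ]
  linear_combination hwilson

theorem lemma_of_tangents [Fintype F] (hT : IsTangentFamily t S T) (hS : IsArc F k S)
    (hSt : S.card + t = Fintype.card F + k - 1) {E : Finset (Fin k → F)} (hES : E ⊆ S)
    (hE : E.card + 3 = k) {x y z : Fin k → F} (hx : x ∈ S) (hy : y ∈ S) (hz : z ∈ S)
    (hxE : x ∉ E) (hyE : y ∉ E) (hzE : z ∉ E) (hxy : x ≠ y) (hxz : x ≠ z) (hyz : y ≠ z) :
    T (insert x E) y / T (insert x E) z * (T (insert y E) z / T (insert y E) x) *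
      (T (insert z E) x / T (insert z E) y) = (-1) ^ (t + 1) := by
  set W := insert x (insert y (insert z E))
  have hWS : W ⊆ S := by simp only [W, insert_subset_iff]; exact ⟨hx, hy, hz, hES⟩
  have hW : W.card = k := by
    rw [card_insert_of_notMem (by simp [hxy, hxz, hxE]),
      card_insert_of_notMem (by simp [hyz, hyE]), card_insert_of_notMem hzE]
    omega
  have hxW : x ∈ W := by simp [W]
  have hyW : y ∈ W := by simp [W]
  have hzW : z ∈ W := by simp [W]
  set Bs := hS.basis hWS hW
  have hx' : T (insert x E) y / T (insert x E) z = (-1) ^ (t + 1) *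
      ∏ u ∈ S \ W, Bs.coord ⟨y, hyW⟩ u / Bs.coord ⟨z, hzW⟩ u :=
    hT.div_eq_prod_coord_div hS hSt hWS hW (b := ⟨y, hyW⟩) (c := ⟨z, hzW⟩) (by simpa using hyz)
      (by simp [hxy.symm, hyE]) (by simp [hxz.symm, hzE])
      (by ext; simp only [W, mem_insert]; tauto)
  have hy' : T (insert y E) z / T (insert y E) x = (-1) ^ (t + 1) *
      ∏ u ∈ S \ W, Bs.coord ⟨z, hzW⟩ u / Bs.coord ⟨x, hxW⟩ u :=
    hT.div_eq_prod_coord_div hS hSt hWS hW (b := ⟨z, hzW⟩) (c := ⟨x, hxW⟩)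
      (by simpa using hxz.symm) (by simp [hyz.symm, hzE]) (by simp [hxy, hxE])
      (by ext; simp only [W, mem_insert]; tauto)
  have hz' : T (insert z E) x / T (insert z E) y = (-1) ^ (t + 1) *
      ∏ u ∈ S \ W, Bs.coord ⟨x, hxW⟩ u / Bs.coord ⟨y, hyW⟩ u :=
    hT.div_eq_prod_coord_div hS hSt hWS hW (b := ⟨x, hxW⟩) (c := ⟨y, hyW⟩) (by simpa using hxy)
      (by simp [hxz, hxE]) (by simp [hyz, hyE]) rfl
  have hcancel : (∏ u ∈ S \ W, Bs.coord ⟨y, hyW⟩ u / Bs.coord ⟨z, hzW⟩ u) *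
      (∏ u ∈ S \ W, Bs.coord ⟨z, hzW⟩ u / Bs.coord ⟨x, hxW⟩ u) *
      (∏ u ∈ S \ W, Bs.coord ⟨x, hxW⟩ u / Bs.coord ⟨y, hyW⟩ u) = 1 := by
    rw [← prod_mul_distrib, ← prod_mul_distrib]
    refine prod_eq_one fun u hu => ?_
    rw [mem_sdiff] at hu
    have : ∀ w : W, Bs.coord w u ≠ 0 := hS.coord_ne_zero hWS hW hu.1 hu.2
    rw [div_mul_div_comm, div_mul_div_comm,
      div_eq_one_iff_eq (mul_ne_zero (mul_ne_zero (this _) (this _)) (this _))]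
    ring
  have hsign : ((-1 : F) ^ (t + 1)) ^ 2 = 1 := by rw [← pow_mul, pow_mul', neg_one_sq, one_pow]
  rw [hx', hy', hz']
  linear_combination ((-1 : F) ^ (t + 1)) ^ 3 * hcancel + (-1 : F) ^ (t + 1) * hsign

theorem div_mul_div_eq_neg_one_pow_mul_div [Fintype F] (hT : IsTangentFamily t S T)
    (hS : IsArc F k S) (hSt : S.card + t = Fintype.card F + k - 1) {E : Finset (Fin k → F)}
    (hES : E ⊆ S) (hE : E.card + 3 = k) {x y z : Fin k → F} (hx : x ∈ S) (hy : y ∈ S)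
    (hz : z ∈ S) (hxE : x ∉ E) (hyE : y ∉ E) (hzE : z ∉ E) (hxy : x ≠ y) (hxz : x ≠ z)
    (hyz : y ≠ z) :
    T (insert z E) y / T (insert z E) x * (T (insert y E) x / T (insert y E) z) =
      (-1) ^ (t + 1) * (T (insert x E) y / T (insert x E) z) := by
  have hxES : insert x E ⊆ S := insert_subset hx hES
  have hxEcard : (insert x E).card = k - 2 := by rw [card_insert_of_notMem hxE]; omega
  have hy' := hT.apply_ne_zero hxES hxEcard hy (by simp [Ne.symm hxy, hyE])
  have hz' := hT.apply_ne_zero hxES hxEcard hz (by simp [Ne.symm hxz, hzE])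
  rw [← inv_div (T (insert x E) z), ← div_eq_mul_inv]
  refine eq_div_of_mul_eq (div_ne_zero hz' hy') ?_
  rw [← hT.lemma_of_tangents hS hSt hES hE hy hx hz hyE hxE hzE hxy.symm hyz hxz]
  ring

end IsTangentFamily

theorem segreP_cons_cons {F : Type} [Field F] [DecidableEq F] {k : ℕ}
    (T : Finset (Fin k → F) → (Fin k → F) → F) (D : Finset (Fin k → F))
    (a b : Fin k → F) (A B : List (Fin k → F)) :
    segreP T D (a :: A) (b :: B) =
      T (D ∪ B.toFinset) a / T (D ∪ B.toFinset) b * segreP T (insert a D) A B := by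
  simp only [segreP, List.length_cons, prod_range_succ', List.take_succ_cons,
    List.toFinset_cons, List.drop_succ_cons, List.getD_cons_succ, union_insert, insert_union,
    List.take_zero, List.toFinset_nil, union_empty, List.drop_zero, List.getD_cons_zero,
    div_eq_mul_inv]
  ring

theorem statement8_general (k q t n : ℕ)
    (F : Type) [Field F] [Fintype F] [DecidableEq F] (hF : Fintype.card F = q)
    (S : Finset (Fin k → F))
    (harc : ∀ A ⊆ S, A.card = k →
      LinearIndependent F (fun v : {x // x ∈ A} => (v : Fin k → F)) ∧
      Submodule.span F (A : Set (Fin k → F)) = ⊤)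
    (ht : S.card + t = q + k - 1)
    (T : Finset (Fin k → F) → (Fin k → F) → F) (hT : IsTangentFamily t S T)
    (A B : List (Fin k → F)) (hA : A.length + 1 = n) (hB : B.length = n)
    (x y : Fin k → F)
    (hnd : (x :: y :: (A ++ B)).Nodup) (hin : ∀ v ∈ x :: y :: (A ++ B), v ∈ S)
    (D : Finset (Fin k → F)) (hD : D ⊆ S) (hDcard : D.card + n + 2 = k)
    (hdisj : ∀ v ∈ x :: y :: (A ++ B), v ∉ D) :
    T (D ∪ B.toFinset) y * (T (D ∪ B.toFinset) x)⁻¹ *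
        segreP T (insert y D) (x :: A) B =
      (-1 : F) ^ (t + 1) * segreP T (insert x D) (y :: A) B := by
  subst hF
  obtain ⟨z, B, rfl⟩ := List.exists_cons_of_length_pos (show 0 < B.length by omega)
  have hsub : (x :: y :: z :: B).Sublist (x :: y :: (A ++ z :: B)) :=
    ((List.sublist_append_right A _).cons_cons y).cons_cons x
  have hmem : ∀ v ∈ x :: y :: z :: B, v ∈ S ∧ v ∉ D := fun v hv =>
    ⟨hin v (hsub.subset hv), hdisj v (hsub.subset hv)⟩
  simp only [List.forall_mem_cons] at hmem
  obtain ⟨⟨hx, hxD⟩, ⟨hy, hyD⟩, ⟨hz, hzD⟩, hBD⟩ := hmem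
  obtain ⟨⟨hxy, hxz, hxB⟩, ⟨hyz, hyB⟩, hzB, hBnd⟩ := by
    simpa only [List.nodup_cons, List.mem_cons, not_or] using hnd.sublist hsub
  set E := D ∪ B.toFinset
  have hES : E ⊆ S := union_subset hD fun v hv => (hBD v (List.mem_toFinset.1 hv)).1
  have hE : E.card + 3 = k := by
    rw [card_union_of_disjoint (disjoint_right.2 fun v hv => (hBD v (List.mem_toFinset.1 hv)).2),
      List.toFinset_card_of_nodup hBnd]
    simp only [List.length_cons] at hB
    omega
  have hxE : x ∉ E := by simp [E, hxD, hxB]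
  have hyE : y ∉ E := by simp [E, hyD, hyB]
  have hzE : z ∉ E := by simp [E, hzD, hzB]
  rw [segreP_cons_cons, segreP_cons_cons, insert_comm, List.toFinset_cons, union_insert,
    insert_union, insert_union, ← mul_assoc, ← div_eq_mul_inv,
    hT.div_mul_div_eq_neg_one_pow_mul_div harc ht hES hE hx hy hz hxE hyE hzE hxy hxz hyz]
  ring

/-- switch lemma: for sequences `A`, `B` with `|A| = |B| − 1 = n − 1`,
`D ⊆ S` of size `k − n − 2` and distinct `x, y ∈ S` (all pairwise disjoint):
`(T_{D∪B}(y) / T_{D∪B}(x)) · P_{D∪{y}}((x) ⌢ A, B) = (−1)^{t+1} · P_{D∪{x}}((y) ⌢ A, B)`. -/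
theorem statement8 (p h k q t n : ℕ) (hp : p.Prime) (hh : 1 ≤ h) (hq : q = p ^ h)
    (hk : 3 ≤ k)
    (F : Type) [Field F] [Fintype F] [DecidableEq F] (hF : Fintype.card F = q)
    (S : Finset (Fin k → F))
    (harc : ∀ A ⊆ S, A.card = k →
      LinearIndependent F (fun v : {x // x ∈ A} => (v : Fin k → F)) ∧
      Submodule.span F (A : Set (Fin k → F)) = ⊤)
    (ht : S.card + t = q + k - 1) (ht1 : 1 ≤ t) (hSk : k ≤ S.card)
    (T : Finset (Fin k → F) → (Fin k → F) → F) (hT : IsTangentFamily t S T)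
    (A B : List (Fin k → F)) (hA : A.length + 1 = n) (hB : B.length = n)
    (x y : Fin k → F)
    (hnd : (x :: y :: (A ++ B)).Nodup) (hin : ∀ v ∈ x :: y :: (A ++ B), v ∈ S)
    (D : Finset (Fin k → F)) (hD : D ⊆ S) (hDcard : D.card + n + 2 = k)
    (hdisj : ∀ v ∈ x :: y :: (A ++ B), v ∉ D) :
    T (D ∪ B.toFinset) y * (T (D ∪ B.toFinset) x)⁻¹ *
        segreP T (insert y D) (x :: A) B =
      (-1 : F) ^ (t + 1) * segreP T (insert x D) (y :: A) B :=
  statement8_general k q t n F hF S harc ht T hT A B hA hB x y hnd hin D hD hDcard hdisj
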